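/- If f : [0, B] → [0, B] is continuous and unimodal with critical point x_max (increasing on [0, x_max], decreasing on [x_max, B]), f(x_max) > x_max, f has a unique fixed point x* with x* > x_max, and f²(x_max) ≤ x_max ≤ f(x_max) ≤ B, then f maps the interval [f²(x_max), f(x_max)] into itself, i.e. this interval is invariant. -/
import Mathlib


open Set

theorem unimodal_invariant_interval
    (B xmax xstar : ℝ) (f : ℝ → ℝ)
    (hB : 0 < B)
    (hcont : ContinuousOn f (Icc 0 B))
    (hmaps : MapsTo f (Icc 0 B) (Icc 0 B))
    (hxmax : xmax ∈ Icc (0 : ℝ) B)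
    (hmono : StrictMonoOn f (Icc 0 xmax))
    (hanti : StrictAntiOn f (Icc xmax B))
    (hfmax : xmax < f xmax)
    (hfix : f xstar = xstar) (hxstar : xmax < xstar)
    (huniq : ∀ x ∈ Icc (0 : ℝ) B, f x = x → x = xstar)
    (h1 : f (f xmax) ≤ xmax) (h2 : f xmax ≤ B) :
    MapsTo f (Icc (f (f xmax)) (f xmax)) (Icc (f (f xmax)) (f xmax)) := by
  have hM : f xmax ∈ Icc (0:ℝ) B := hmaps hxmax
  have hm : f (f xmax) ∈ Icc (0:ℝ) B := hmaps hM
  -- key: f x > x for x ∈ [0,B] with x < xstar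
  have hkey : ∀ x ∈ Icc (0:ℝ) B, x < xstar → x < f x := by
    intro x hx hlt
    by_contra h
    push_neg at h
    rcases eq_or_lt_of_le h with heq | hlt2
    · exact absurd (huniq x hx heq) (ne_of_lt hlt)
    · have hsub : Icc (0:ℝ) x ⊆ Icc 0 B := Icc_subset_Icc le_rfl hx.2
      have hgc : ContinuousOn (fun y => f y - y) (Icc 0 x) :=
        (hcont.mono hsub).sub continuousOn_id
      have h0 : 0 < f 0 - 0 := by
        have h0B : (0:ℝ) ∈ Icc (0:ℝ) B := ⟨le_rfl, hB.le⟩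
        have hf0 := (hmaps h0B).1
        rcases eq_or_lt_of_le hf0 with he | hl
        · exfalso
          have := huniq 0 h0B he.symm
          linarith [hxmax.1]
        · simpa using hl
      have hx0 : (0:ℝ) ≤ x := hx.1
      have hmem : (0:ℝ) ∈ Icc (f x - x) (f 0 - 0) := ⟨by linarith, by linarith⟩
      obtain ⟨c, hc, hc0⟩ := intermediate_value_Icc' hx0 hgc hmem
      have hcfix : f c = c := by
        have : f c - c = 0 := hc0
        linarith
      have := huniq c (hsub hc) hcfix
      linarith [hc.2]
  intro x hx
  have hxB : x ∈ Icc (0:ℝ) B := ⟨le_trans hm.1 hx.1, le_trans hx.2 h2⟩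
  constructor
  · -- lower bound
    rcases le_total x xmax with hxm | hxm
    · have : x < f x := hkey x hxB (lt_of_le_of_lt hxm hxstar)
      linarith [hx.1]
    · exact hanti.antitoneOn ⟨hxm, hxB.2⟩ ⟨le_trans hxm hx.2, h2⟩ hx.2
  · -- upper bound
    rcases le_total x xmax with hxm | hxm
    · exact hmono.monotoneOn ⟨hxB.1, hxm⟩ ⟨hxmax.1, le_rfl⟩ hxm
    · exact hanti.antitoneOn ⟨le_rfl, hxmax.2⟩ ⟨hxm, hxB.2⟩ hxm
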